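/- Let $(\Omega,\Sigma,\mu)$ and $(\Omega',\Sigma',\nu)$ be $\sigma$-finite measure spaces, $1 \le r_2 \le 2 \le r_1 < \infty$ and $1 \le q \le 2 \le p < \infty$. Then there is a constant $C$ depending only on $p$, $q$, $r_1$, $r_2$ such that every bounded linear operator $T : L^{r_1}(\mu) \to L^{r_2}(\nu)$ is $(p,q)$-regular with constant $C\|T\|$. -/

import Mathlib

/-!
Khintchine's inequality: for real `a₁, …, aₙ` and `r > 0`, the average of `|∑ ± aᵢ| ^ r` over
all sign choices is comparable to `(∑ aᵢ²) ^ (r / 2)`. Integrated, it makes the `L^r` norm of the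
square function `√(∑ fᵢ²)` comparable to `A_r(f) := (𝔼 ‖∑ ± fᵢ‖_r ^ r) ^ (1 / r)`. Since
`p ≥ 2 ≥ q` and `r₂ ≤ r₁`,
  `‖(∑ |T fᵢ| ^ p) ^ (1 / p)‖_{r₂} ≤ ‖√(∑ (T fᵢ)²)‖_{r₂} ≲ A_{r₂}(T f) ≤ ‖T‖ A_{r₁}(f)`
  `  ≲ ‖T‖ ‖√(∑ fᵢ²)‖_{r₁} ≤ ‖T‖ ‖(∑ |fᵢ| ^ q) ^ (1 / q)‖_{r₁}`,
where `A_{r₂}(T f) ≤ ‖T‖ A_{r₁}(f)` is the operator bound plus monotonicity of power means.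

The upper Khintchine bound comes from `|x| ^ r ≤ 2 r ^ r cosh x` and
`𝔼 cosh (∑ ± aᵢ) = ∏ cosh aᵢ ≤ exp (∑ aᵢ² / 2)`; the lower bound follows from the upper one for
the exponent `4 - r` by Cauchy–Schwarz, since `𝔼 (∑ ± aᵢ)² = ∑ aᵢ²`.
-/

open MeasureTheory ENNReal

/-- `T` is `(p,q)`-regular with constant `K`. -/
def IsPQRegular {Ω Ω' : Type*} [MeasurableSpace Ω] [MeasurableSpace Ω']
    {μ : Measure Ω} {ν : Measure Ω'} {u v : ℝ≥0∞}
    (T : Lp ℝ u μ → Lp ℝ v ν) (p q K : ℝ) : Prop :=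
  ∀ (n : ℕ) (f : Fin n → Lp ℝ u μ),
    eLpNorm (fun ω' => (∑ i, |T (f i) ω'| ^ p) ^ (1 / p)) v ν ≤
      ENNReal.ofReal K * eLpNorm (fun ω => (∑ i, |f i ω| ^ q) ^ (1 / q)) u μ

open Finset Real
open scoped BigOperators

noncomputable def boolSign (b : Bool) : ℝ := if b then 1 else -1

@[simp] lemma boolSign_true : boolSign true = 1 := rfl
@[simp] lemma boolSign_false : boolSign false = -1 := rfl

lemma boolSign_not (b : Bool) : boolSign (!b) = -boolSign b := by cases b <;> simp

lemma boolSign_mul_self (b : Bool) : boolSign b * boolSign b = 1 := by cases b <;> simp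

noncomputable def rademacherSum {ι E : Type*} [Fintype ι] [AddCommGroup E] [Module ℝ E]
    (x : ι → E) (s : ι → Bool) : E :=
  ∑ i, boolSign (s i) • x i

lemma rademacherSum_smul {ι E : Type*} [Fintype ι] [AddCommGroup E] [Module ℝ E]
    (c : ℝ) (x : ι → E) (s : ι → Bool) :
    rademacherSum (c • x) s = c • rademacherSum x s := by
  simp [rademacherSum, smul_sum, smul_comm c]

lemma rademacherSum_neg {ι E : Type*} [Fintype ι] [AddCommGroup E] [Module ℝ E]
    (x : ι → E) (s : ι → Bool) :
    rademacherSum (-x) s = -rademacherSum x s := by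
  simpa using rademacherSum_smul (-1) x s

lemma map_rademacherSum {ι E F : Type*} [Fintype ι] [AddCommGroup E] [Module ℝ E]
    [AddCommGroup F] [Module ℝ F] {G : Type*} [FunLike G E F] [LinearMapClass G ℝ E F] (T : G)
    (x : ι → E) (s : ι → Bool) :
    T (rademacherSum x s) = rademacherSum (fun i => T (x i)) s := by
  simp [rademacherSum]

section Khintchine

variable {ι : Type*} [Fintype ι] [DecidableEq ι]

lemma Fintype.expect_pi_prod {κ R : Type*} [Fintype κ] [Semifield R] [CharZero R]
    (g : ι → κ → R) :
    𝔼 s : ι → κ, ∏ i, g i (s i) = ∏ i, 𝔼 k, g i k := by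
  simp only [Fintype.expect_eq_sum_div_card, ← Fintype.prod_sum, Fintype.card_pi, Nat.cast_prod]
  exact (prod_div_distrib _ _).symm

lemma expect_boolSign_mul_boolSign (i j : ι) :
    𝔼 s : ι → Bool, boolSign (s i) * boolSign (s j) = if i = j then 1 else 0 := by
  split_ifs with hij
  · simp [hij, boolSign_mul_self]
  · have hflip : Function.Involutive fun s : ι → Bool => Function.update s i (!s i) :=
      fun s => by simp
    -- flipping the sign `s i` is a bijection that negates the summand
    have h := Fintype.expect_bijective _ hflip.bijective
      (fun s => boolSign (s i) * boolSign (s j))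
      (fun s => -(boolSign (s i) * boolSign (s j))) fun s => by
        simp [Function.update_of_ne (Ne.symm hij), boolSign_not]
    rw [expect_neg_distrib] at h
    linarith

lemma expect_rademacherSum_sq (a : ι → ℝ) :
    𝔼 s, rademacherSum a s ^ 2 = ∑ i, a i ^ 2 := by
  calc 𝔼 s, rademacherSum a s ^ 2
      = ∑ i, ∑ j, a i * a j * 𝔼 s : ι → Bool, boolSign (s i) * boolSign (s j) := by
        simp only [rademacherSum, sq, sum_mul_sum, smul_eq_mul, expect_sum_comm, mul_expect]
        exact sum_congr rfl fun i _ => sum_congr rfl fun j _ =>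
          expect_congr rfl fun s _ => by ring
    _ = ∑ i, a i ^ 2 := by simp [expect_boolSign_mul_boolSign, sq]

lemma expect_exp_rademacherSum (a : ι → ℝ) :
    𝔼 s, exp (rademacherSum a s) = ∏ i, cosh (a i) := by
  simp only [rademacherSum, smul_eq_mul, exp_sum]
  rw [Fintype.expect_pi_prod (fun i b => exp (boolSign b * a i))]
  congr! 1 with i
  rw [Fintype.expect_eq_sum_div_card, Fintype.sum_bool]
  simp [cosh_eq]

lemma expect_cosh_rademacherSum (a : ι → ℝ) :
    𝔼 s, cosh (rademacherSum a s) = ∏ i, cosh (a i) := by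
  have h (s : ι → Bool) :
      cosh (rademacherSum a s) = (exp (rademacherSum a s) + exp (rademacherSum (-a) s)) / 2 := by
    rw [cosh_eq, rademacherSum_neg]
  simp_rw [h, ← expect_div, expect_add_distrib, expect_exp_rademacherSum, Pi.neg_apply, cosh_neg,
    add_self_div_two]

lemma abs_rpow_le_two_mul_rpow_mul_cosh {r : ℝ} (hr : 0 ≤ r) (x : ℝ) :
    |x| ^ r ≤ 2 * r ^ r * cosh x := by
  have h := ProbabilityTheory.rpow_abs_le_mul_exp_abs x hr one_ne_zero
  rw [abs_one, div_one, one_mul] at h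
  calc |x| ^ r ≤ r ^ r * exp |x| := h
    _ ≤ r ^ r * (exp x + exp (-x)) := by gcongr; exact exp_abs_le x
    _ = 2 * r ^ r * cosh x := by rw [cosh_eq]; ring

lemma expect_abs_rademacherSum_rpow_le {r : ℝ} (hr : 0 ≤ r) (a : ι → ℝ) :
    𝔼 s, |rademacherSum a s| ^ r ≤ 2 * r ^ r * exp ((∑ i, a i ^ 2) / 2) :=
  calc 𝔼 s, |rademacherSum a s| ^ r ≤ 𝔼 s, 2 * r ^ r * cosh (rademacherSum a s) :=
        expect_le_expect fun s _ => abs_rpow_le_two_mul_rpow_mul_cosh hr _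
    _ = 2 * r ^ r * ∏ i, cosh (a i) := by rw [← mul_expect, expect_cosh_rademacherSum]
    _ ≤ 2 * r ^ r * ∏ i, exp (a i ^ 2 / 2) := by
        gcongr with i
        exact cosh_le_exp_half_sq _
    _ = 2 * r ^ r * exp ((∑ i, a i ^ 2) / 2) := by rw [← exp_sum, sum_div]

/-- `r ^ r` comes from `|x| ^ r ≤ r ^ r exp |x|`, and `exp (1 / 2)` bounds `𝔼 cosh` of a
Rademacher sum with `∑ aᵢ² = 1`. -/
noncomputable def khintchineConst (r : ℝ) : ℝ := 2 * r ^ r * exp (1 / 2)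

lemma khintchineConst_nonneg {r : ℝ} (hr : 0 ≤ r) : 0 ≤ khintchineConst r := by
  unfold khintchineConst; positivity

lemma khintchine_upper {r : ℝ} (hr : 0 < r) (a : ι → ℝ) :
    𝔼 s, |rademacherSum a s| ^ r ≤ khintchineConst r * √(∑ i, a i ^ 2) ^ r := by
  have hsum : 0 ≤ ∑ i, a i ^ 2 := sum_nonneg fun i _ => sq_nonneg _
  have hσ := sq_sqrt hsum
  have hσ0 := sqrt_nonneg (∑ i, a i ^ 2)
  set σ := √(∑ i, a i ^ 2)
  clear_value σ
  rcases hσ0.eq_or_lt with rfl | hσ0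
  · have ha : a = 0 := funext fun i => by
      simpa using (sum_eq_zero_iff_of_nonneg fun i _ => sq_nonneg (a i)).1
        (by simpa using hσ.symm) i (mem_univ i)
    simp [ha, rademacherSum, zero_rpow hr.ne']
  set b := σ⁻¹ • a
  have hb : ∑ i, b i ^ 2 = 1 := by
    simp only [b, Pi.smul_apply, smul_eq_mul, mul_pow, ← mul_sum, inv_pow, ← hσ]
    exact inv_mul_cancel₀ (by positivity)
  have hab (s : ι → Bool) : |rademacherSum a s| ^ r = σ ^ r * |rademacherSum b s| ^ r := by
    rw [show a = σ • b by simp [b, smul_smul, mul_inv_cancel₀ hσ0.ne'], rademacherSum_smul,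
      smul_eq_mul, abs_mul, abs_of_pos hσ0, mul_rpow hσ0.le (abs_nonneg _)]
  calc 𝔼 s, |rademacherSum a s| ^ r = σ ^ r * 𝔼 s, |rademacherSum b s| ^ r := by
        simp_rw [hab, mul_expect]
    _ ≤ σ ^ r * khintchineConst r := by
        gcongr
        simpa [hb, khintchineConst] using expect_abs_rademacherSum_rpow_le hr.le b
    _ = khintchineConst r * σ ^ r := mul_comm _ _

lemma khintchine_lower {r : ℝ} (hr : 0 < r) (hr4 : r < 4) (a : ι → ℝ) :
    √(∑ i, a i ^ 2) ^ r ≤ khintchineConst (4 - r) * 𝔼 s, |rademacherSum a s| ^ r := by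
  have hsum : 0 ≤ ∑ i, a i ^ 2 := sum_nonneg fun i _ => sq_nonneg _
  rcases (sqrt_nonneg (∑ i, a i ^ 2)).eq_or_lt with h0 | hσ0
  · rw [← h0, zero_rpow hr.ne', khintchineConst]
    have : 0 ≤ 𝔼 s, |rademacherSum a s| ^ r := expect_nonneg fun s _ => by positivity
    positivity
  set σ := √(∑ i, a i ^ 2)
  have half_sq {x : ℝ} (hx : 0 ≤ x) (u : ℝ) : (x ^ (u / 2)) ^ 2 = x ^ u := by
    rw [← Real.rpow_natCast, ← rpow_mul hx]; norm_num
  -- Cauchy–Schwarz, splitting `S ^ 2 = |S| ^ (r / 2) * |S| ^ ((4 - r) / 2)`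
  have hcs : σ ^ r * σ ^ (4 - r) ≤
      (𝔼 s, |rademacherSum a s| ^ r) * 𝔼 s, |rademacherSum a s| ^ (4 - r) := by
    have hsplit (s : ι → Bool) : rademacherSum a s ^ 2 =
        |rademacherSum a s| ^ (r / 2) * |rademacherSum a s| ^ ((4 - r) / 2) := by
      rw [← rpow_add' (abs_nonneg _) (by ring_nf; norm_num),
        show r / 2 + (4 - r) / 2 = (2 : ℕ) by push_cast; ring, Real.rpow_natCast, sq_abs]
    calc σ ^ r * σ ^ (4 - r) = (𝔼 s, rademacherSum a s ^ 2) ^ 2 := by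
          rw [← rpow_add hσ0, add_sub_cancel, show (4 : ℝ) = (2 : ℕ) * (2 : ℕ) by norm_num,
            rpow_mul hσ0.le, Real.rpow_natCast, Real.rpow_natCast, sq_sqrt hsum,
            expect_rademacherSum_sq]
      _ ≤ _ := by
          simp_rw [hsplit]
          refine (expect_mul_sq_le_sq_mul_sq _ _ _).trans_eq ?_
          simp_rw [half_sq (abs_nonneg _)]
  have hup := khintchine_upper (r := 4 - r) (by linarith) a
  refine le_of_mul_le_mul_right (hcs.trans ?_) (rpow_pos_of_pos hσ0 (4 - r))
  calc _ ≤ (𝔼 s, |rademacherSum a s| ^ r) * (khintchineConst (4 - r) * σ ^ (4 - r)) := by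
        gcongr
    _ = _ := by ring

end Khintchine

lemma sum_rpow_le_rpow_sum {ι : Type*} (s : Finset ι) {c : ℝ} (hc : 1 ≤ c) {y : ι → ℝ}
    (hy : ∀ i, 0 ≤ y i) : ∑ i ∈ s, y i ^ c ≤ (∑ i ∈ s, y i) ^ c := by
  classical
  induction s using Finset.induction_on with
  | empty => simp [zero_rpow (by positivity : c ≠ 0)]
  | insert j s hj ih =>
    rw [sum_insert hj, sum_insert hj]
    calc y j ^ c + ∑ i ∈ s, y i ^ c ≤ y j ^ c + (∑ i ∈ s, y i) ^ c := by gcongr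
      _ ≤ _ := Real.add_rpow_le_rpow_add (hy j) (sum_nonneg fun i _ => hy i) hc

lemma sum_rpow_rpow_le_of_le {ι : Type*} (s : Finset ι) {a b : ℝ} (ha : 0 < a) (hab : a ≤ b)
    {x : ι → ℝ} (hx : ∀ i, 0 ≤ x i) :
    (∑ i ∈ s, x i ^ b) ^ (1 / b) ≤ (∑ i ∈ s, x i ^ a) ^ (1 / a) := by
  have hb : 0 < b := ha.trans_le hab
  have hsum : 0 ≤ ∑ i ∈ s, x i ^ a := sum_nonneg fun i _ => rpow_nonneg (hx i) _
  calc (∑ i ∈ s, x i ^ b) ^ (1 / b) = (∑ i ∈ s, (x i ^ a) ^ (b / a)) ^ (1 / b) := by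
        simp_rw [← rpow_mul (hx _), mul_div_cancel₀ _ ha.ne']
    _ ≤ ((∑ i ∈ s, x i ^ a) ^ (b / a)) ^ (1 / b) := by
        refine rpow_le_rpow (sum_nonneg fun i _ => rpow_nonneg (rpow_nonneg (hx i) _) _) ?_
          (by positivity)
        exact sum_rpow_le_rpow_sum s ((one_le_div ha).2 hab) fun i => rpow_nonneg (hx i) _
    _ = (∑ i ∈ s, x i ^ a) ^ (1 / a) := by
        rw [← rpow_mul hsum]; congr 1; field_simp

lemma sqrt_sum_sq_eq {ι : Type*} (s : Finset ι) (x : ι → ℝ) :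
    √(∑ i ∈ s, x i ^ 2) = (∑ i ∈ s, |x i| ^ (2 : ℝ)) ^ (1 / (2 : ℝ)) := by
  simp [sqrt_eq_rpow]

lemma expect_rpow_rpow_le_of_le {κ : Type*} [Fintype κ] [Nonempty κ] {u v : ℝ} (hu : 0 < u)
    (huv : u ≤ v) {x : κ → ℝ} (hx : ∀ k, 0 ≤ x k) :
    (𝔼 k, x k ^ u) ^ (1 / u) ≤ (𝔼 k, x k ^ v) ^ (1 / v) := by
  have hv : 0 < v := hu.trans_le huv
  have holder := compact_inner_le_weight_mul_Lp_of_nonneg univ ((one_le_div hu).2 huv)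
    (w := fun _ => 1) (f := fun k => x k ^ u) (fun _ => zero_le_one) fun k => rpow_nonneg (hx k) _
  simp only [one_mul, Fintype.expect_const, Real.one_rpow, ← rpow_mul (hx _),
    mul_div_cancel₀ _ hu.ne',
      inv_div] at holder
  calc (𝔼 k, x k ^ u) ^ (1 / u) ≤ ((𝔼 k, x k ^ v) ^ (u / v)) ^ (1 / u) := by
        gcongr
        exact expect_nonneg fun k _ => rpow_nonneg (hx k) _
    _ = (𝔼 k, x k ^ v) ^ (1 / v) := by
        rw [← rpow_mul (expect_nonneg fun k _ => rpow_nonneg (hx k) _)]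
        congr 1
        field_simp

lemma expect_norm_rademacherSum_map_rpow_rpow_le {ι E F : Type*} [Fintype ι] [DecidableEq ι]
    [NormedAddCommGroup E] [NormedSpace ℝ E] [NormedAddCommGroup F] [NormedSpace ℝ F]
    (T : E →L[ℝ] F) (x : ι → E) {u v : ℝ} (hu : 0 < u) (huv : u ≤ v) :
    (𝔼 s, ‖rademacherSum (fun i => T (x i)) s‖ ^ u) ^ (1 / u) ≤
      ‖T‖ * (𝔼 s, ‖rademacherSum x s‖ ^ v) ^ (1 / v) :=
  calc (𝔼 s, ‖rademacherSum (fun i => T (x i)) s‖ ^ u) ^ (1 / u)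
      ≤ (𝔼 s, (‖T‖ * ‖rademacherSum x s‖) ^ u) ^ (1 / u) := by
        simp_rw [← map_rademacherSum T]
        gcongr with s
        exact T.le_opNorm _
    _ = ‖T‖ * (𝔼 s, ‖rademacherSum x s‖ ^ u) ^ (1 / u) := by
        simp_rw [mul_rpow (norm_nonneg T) (norm_nonneg _), ← mul_expect]
        rw [mul_rpow (by positivity) (expect_nonneg fun s _ => by positivity),
          ← rpow_mul (norm_nonneg T), mul_one_div_cancel hu.ne', Real.rpow_one]
    _ ≤ ‖T‖ * (𝔼 s, ‖rademacherSum x s‖ ^ v) ^ (1 / v) := by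
        gcongr
        exact expect_rpow_rpow_le_of_le hu huv fun s => norm_nonneg _

lemma ENNReal.ofReal_expect_of_nonneg {κ : Type*} [Fintype κ] [Nonempty κ] {F : κ → ℝ}
    (hF : ∀ k, 0 ≤ F k) :
    ENNReal.ofReal (𝔼 k, F k) = (Fintype.card κ : ℝ≥0∞)⁻¹ * ∑ k, ENNReal.ofReal (F k) := by
  rw [Fintype.expect_eq_sum_div_card, div_eq_inv_mul, ENNReal.ofReal_mul (by positivity),
    ENNReal.ofReal_sum_of_nonneg fun k _ => hF k, ENNReal.ofReal_inv_of_pos (by positivity),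
    ENNReal.ofReal_natCast]

section Lp

variable {Ω : Type*} [MeasurableSpace Ω] {μ : Measure Ω} {r : ℝ}

lemma eLpNorm_ofReal_eq_lintegral (hr : 0 < r) (h : Ω → ℝ) :
    eLpNorm h (ENNReal.ofReal r) μ = (∫⁻ ω, ENNReal.ofReal (|h ω| ^ r) ∂μ) ^ (1 / r) := by
  rw [eLpNorm_eq_lintegral_rpow_enorm_toReal (by simpa using hr) ENNReal.ofReal_ne_top,
    ENNReal.toReal_ofReal hr.le]
  congr 1
  refine lintegral_congr fun ω => ?_
  rw [← ofReal_norm, Real.norm_eq_abs, ENNReal.ofReal_rpow_of_nonneg (abs_nonneg _) hr.le]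

lemma lintegral_ofReal_abs_rpow (hr : 0 < r) (g : Lp ℝ (ENNReal.ofReal r) μ) :
    ∫⁻ ω, ENNReal.ofReal (|g ω| ^ r) ∂μ = ENNReal.ofReal (‖g‖ ^ r) := by
  rw [Lp.norm_def, ← ENNReal.ofReal_rpow_of_nonneg ENNReal.toReal_nonneg hr.le,
    ENNReal.ofReal_toReal (Lp.eLpNorm_ne_top g), eLpNorm_ofReal_eq_lintegral hr,
    ← ENNReal.rpow_mul, one_div_mul_cancel hr.ne', ENNReal.rpow_one]

variable {ι : Type*} [Fintype ι]

lemma Lp.coeFn_rademacherSum {E : Type*} [NormedAddCommGroup E] [NormedSpace ℝ E] {p : ℝ≥0∞}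
    (f : ι → Lp E p μ) (s : ι → Bool) :
    ⇑(rademacherSum f s) =ᵐ[μ] fun ω => rademacherSum (fun i => f i ω) s := by
  filter_upwards [Lp.coeFn_fun_finsetSum univ fun i => boolSign (s i) • f i,
    ae_all_iff.2 fun i => Lp.coeFn_smul (boolSign (s i)) (f i)] with ω hsum hsmul
  unfold rademacherSum
  rw [hsum]
  simp only [hsmul, Pi.smul_apply]

variable [DecidableEq ι] [Fact (1 ≤ ENNReal.ofReal r)]

lemma ofReal_expect_norm_rademacherSum_rpow (hr : 0 < r) (f : ι → Lp ℝ (ENNReal.ofReal r) μ) :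
    ENNReal.ofReal (𝔼 s, ‖rademacherSum f s‖ ^ r) =
      ∫⁻ ω, ENNReal.ofReal (𝔼 s, |rademacherSum (fun i => f i ω) s| ^ r) ∂μ := by
  have hae : ∀ᵐ ω ∂μ, ∀ s, rademacherSum f s ω = rademacherSum (fun i => f i ω) s :=
    ae_all_iff.2 fun s => Lp.coeFn_rademacherSum f s
  calc ENNReal.ofReal (𝔼 s, ‖rademacherSum f s‖ ^ r)
      = (Fintype.card (ι → Bool) : ℝ≥0∞)⁻¹ *
          ∑ s, ∫⁻ ω, ENNReal.ofReal (|rademacherSum f s ω| ^ r) ∂μ := by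
        simp_rw [lintegral_ofReal_abs_rpow hr]
        exact ENNReal.ofReal_expect_of_nonneg fun s => rpow_nonneg (norm_nonneg _) r
    _ = ∫⁻ ω, (Fintype.card (ι → Bool) : ℝ≥0∞)⁻¹ *
          ∑ s, ENNReal.ofReal (|rademacherSum f s ω| ^ r) ∂μ := by
        rw [lintegral_const_mul' _ _ (by simp), lintegral_finsetSum' _ fun s _ =>
          ((Lp.aestronglyMeasurable _).aemeasurable.abs.pow_const r).ennreal_ofReal]
    _ = _ := lintegral_congr_ae <| hae.mono fun ω h => by
        simp_rw [h]
        exact (ENNReal.ofReal_expect_of_nonneg fun s => rpow_nonneg (abs_nonneg _) r).symm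

lemma eLpNorm_sqrt_sum_sq_le (hr : 0 < r) (hr4 : r < 4) (g : ι → Lp ℝ (ENNReal.ofReal r) μ) :
    eLpNorm (fun ω => √(∑ i, g i ω ^ 2)) (ENNReal.ofReal r) μ ≤ ENNReal.ofReal
      (khintchineConst (4 - r) ^ (1 / r) * (𝔼 s, ‖rademacherSum g s‖ ^ r) ^ (1 / r)) := by
  have hB := khintchineConst_nonneg (r := 4 - r) (by linarith)
  have hE : 0 ≤ 𝔼 s, ‖rademacherSum g s‖ ^ r := expect_nonneg fun s _ => by positivity
  rw [eLpNorm_ofReal_eq_lintegral hr, ← mul_rpow hB hE,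
    ← ENNReal.ofReal_rpow_of_nonneg (mul_nonneg hB hE) (by positivity)]
  gcongr
  rw [ENNReal.ofReal_mul hB, ofReal_expect_norm_rademacherSum_rpow hr,
    ← lintegral_const_mul' _ _ ENNReal.ofReal_ne_top]
  refine lintegral_mono fun ω => ?_
  rw [abs_of_nonneg (sqrt_nonneg _), ← ENNReal.ofReal_mul hB]
  exact ENNReal.ofReal_le_ofReal (khintchine_lower hr hr4 _)

lemma ofReal_expect_norm_rademacherSum_rpow_rpow_le (hr : 0 < r)
    (f : ι → Lp ℝ (ENNReal.ofReal r) μ) :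
    ENNReal.ofReal ((𝔼 s, ‖rademacherSum f s‖ ^ r) ^ (1 / r)) ≤
      ENNReal.ofReal (khintchineConst r ^ (1 / r)) *
        eLpNorm (fun ω => √(∑ i, f i ω ^ 2)) (ENNReal.ofReal r) μ := by
  have hB := khintchineConst_nonneg hr.le
  have hE : 0 ≤ 𝔼 s, ‖rademacherSum f s‖ ^ r := expect_nonneg fun s _ => by positivity
  rw [eLpNorm_ofReal_eq_lintegral hr, ← ENNReal.ofReal_rpow_of_nonneg hE (by positivity),
    ← ENNReal.ofReal_rpow_of_nonneg hB (by positivity),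
    ← ENNReal.mul_rpow_of_nonneg _ _ (by positivity)]
  gcongr
  rw [ofReal_expect_norm_rademacherSum_rpow hr, ← lintegral_const_mul' _ _ ENNReal.ofReal_ne_top]
  refine lintegral_mono fun ω => ?_
  rw [abs_of_nonneg (sqrt_nonneg _), ← ENNReal.ofReal_mul hB]
  exact ENNReal.ofReal_le_ofReal (khintchine_upper hr _)

end Lp

theorem isPQRegular_of_le_two_le {Ω Ω' : Type*} [MeasurableSpace Ω] [MeasurableSpace Ω']
    {μ : Measure Ω} {ν : Measure Ω'} {p q r₁ r₂ : ℝ} [Fact (1 ≤ ENNReal.ofReal r₁)]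
    [Fact (1 ≤ ENNReal.ofReal r₂)] (hq : 0 < q) (hq2 : q ≤ 2) (hp : 2 ≤ p) (hr₂ : 0 < r₂)
    (hr₂4 : r₂ < 4) (hr : r₂ ≤ r₁)
    (T : Lp ℝ (ENNReal.ofReal r₁) μ →L[ℝ] Lp ℝ (ENNReal.ofReal r₂) ν) :
    IsPQRegular T p q
      (khintchineConst (4 - r₂) ^ (1 / r₂) * khintchineConst r₁ ^ (1 / r₁) * ‖T‖) := by
  intro n f
  set B₂ := khintchineConst (4 - r₂) ^ (1 / r₂)
  set B₁ := khintchineConst r₁ ^ (1 / r₁)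
  have hB₂ : 0 ≤ B₂ := rpow_nonneg (khintchineConst_nonneg (by linarith)) _
  have hB₁ : 0 ≤ B₁ := rpow_nonneg (khintchineConst_nonneg (by linarith)) _
  calc eLpNorm (fun ω' => (∑ i, |T (f i) ω'| ^ p) ^ (1 / p)) (ENNReal.ofReal r₂) ν
      ≤ eLpNorm (fun ω' => √(∑ i, T (f i) ω' ^ 2)) (ENNReal.ofReal r₂) ν :=
        eLpNorm_mono_real fun ω' => by
          rw [norm_of_nonneg (by positivity), sqrt_sum_sq_eq]
          exact sum_rpow_rpow_le_of_le _ two_pos hp fun i => abs_nonneg _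
    _ ≤ ENNReal.ofReal (B₂ * (𝔼 s, ‖rademacherSum (fun i => T (f i)) s‖ ^ r₂) ^ (1 / r₂)) :=
        eLpNorm_sqrt_sum_sq_le hr₂ hr₂4 _
    _ ≤ ENNReal.ofReal (B₂ * ‖T‖ * (𝔼 s, ‖rademacherSum f s‖ ^ r₁) ^ (1 / r₁)) := by
        rw [mul_assoc]
        gcongr
        exact expect_norm_rademacherSum_map_rpow_rpow_le T f hr₂ hr
    _ = ENNReal.ofReal (B₂ * ‖T‖) *
          ENNReal.ofReal ((𝔼 s, ‖rademacherSum f s‖ ^ r₁) ^ (1 / r₁)) :=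
        ENNReal.ofReal_mul (by positivity)
    _ ≤ ENNReal.ofReal (B₂ * ‖T‖) * (ENNReal.ofReal B₁ *
          eLpNorm (fun ω => √(∑ i, f i ω ^ 2)) (ENNReal.ofReal r₁) μ) := by
        gcongr
        exact ofReal_expect_norm_rademacherSum_rpow_rpow_le (by linarith) f
    _ ≤ ENNReal.ofReal (B₂ * ‖T‖) * (ENNReal.ofReal B₁ *
          eLpNorm (fun ω => (∑ i, |f i ω| ^ q) ^ (1 / q)) (ENNReal.ofReal r₁) μ) := by
        gcongr
        refine eLpNorm_mono_real fun ω => ?_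
        rw [norm_of_nonneg (sqrt_nonneg _), sqrt_sum_sq_eq]
        exact sum_rpow_rpow_le_of_le _ hq hq2 fun i => abs_nonneg _
    _ = ENNReal.ofReal (B₂ * B₁ * ‖T‖) *
          eLpNorm (fun ω => (∑ i, |f i ω| ^ q) ^ (1 / q)) (ENNReal.ofReal r₁) μ := by
        rw [← mul_assoc, ← ENNReal.ofReal_mul (by positivity), mul_right_comm]

/-- For `1 ≤ r₂ ≤ 2 ≤ r₁ < ∞` and `1 ≤ q ≤ 2 ≤ p < ∞` there is a constant
`C` depending only on the exponents such that every bounded operator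
`T : L^{r₁}(μ) → L^{r₂}(ν)` is `(p,q)`-regular with constant `C‖T‖`. -/
theorem stmt14 (p q r₁ r₂ : ℝ) (hr₂ : 1 ≤ r₂) (hr₂2 : r₂ ≤ 2) (h2r₁ : 2 ≤ r₁)
    (hq : 1 ≤ q) (hq2 : q ≤ 2) (h2p : 2 ≤ p)
    [Fact (1 ≤ ENNReal.ofReal r₁)] [Fact (1 ≤ ENNReal.ofReal r₂)] :
    ∃ C : ℝ,
      ∀ (Ω : Type*) (Ω' : Type*) [MeasurableSpace Ω] [MeasurableSpace Ω']
        (μ : Measure Ω) (ν : Measure Ω') [SigmaFinite μ] [SigmaFinite ν]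
        (T : Lp ℝ (ENNReal.ofReal r₁) μ →L[ℝ] Lp ℝ (ENNReal.ofReal r₂) ν),
        IsPQRegular (⇑T) p q (C * ‖T‖) :=
  ⟨_, fun _ _ _ _ _ _ _ _ T => isPQRegular_of_le_two_le (by linarith) hq2 h2p (by linarith)
    (by linarith) (by linarith) T⟩
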